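/- arXiv:2306.15814 — 2 statements merged into one kernel-verified Lean document; each statement's English description precedes it below -/
import Mathlib

section
/- Consider a directed acyclic graph with strictly upper triangular adjacency matrix and let R = [[A, I],[0, B]], where A and B are strictly upper triangular adjacency matrices of subgraphs of equal order. If A = B, then p(R) = p(A) + 1, where p(·) denotes the number of vertices along the longest directed path in the graph represented by the given adjacency matrix. -/
/-!
A path in the graph of `[[A, I], [0, A]]` runs first through the upper copy of `A` and then,
after at most one identity edge `inl v → inr v`, through the lower copy. Gluing the two pieces at
the shared vertex `v` gives a path in `A` with one vertex fewer, which is simple because a strictly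
upper triangular `A` has no cycles; so `p(R) ≤ p(A) + 1`. Conversely a longest path of `A`
followed by the identity edge out of its last vertex has `p(A) + 1` vertices.
-/

/-- `pLen M` is the number of vertices along the longest directed (simple) path in the
directed graph whose adjacency matrix is `M` (an edge from `a` to `b` iff `M a b ≠ 0`). -/
noncomputable def pLen {V : Type*} [Fintype V] (M : Matrix V V ℕ) : ℕ :=
  sSup {r : ℕ | ∃ l : List V, l.Nodup ∧ l.Chain' (fun a b => M a b ≠ 0) ∧ l.length = r}

/-- A matrix is strictly upper triangular. -/
def StrictUpper {q : ℕ} (A : Matrix (Fin q) (Fin q) ℕ) : Prop :=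
  ∀ a b : Fin q, b ≤ a → A a b = 0

/-- A 0–1 matrix (adjacency matrix). -/
def ZeroOne {q : ℕ} (A : Matrix (Fin q) (Fin q) ℕ) : Prop :=
  ∀ a b : Fin q, A a b ≤ 1

section pLen

variable {V : Type*} {M : Matrix V V ℕ}

lemma nonempty_pathLengths (M : Matrix V V ℕ) :
    {r : ℕ | ∃ l : List V, l.Nodup ∧ l.IsChain (M · · ≠ 0) ∧ l.length = r}.Nonempty :=
  ⟨0, [], List.nodup_nil, List.isChain_nil, rfl⟩

variable [Fintype V]

lemma bddAbove_pathLengths (M : Matrix V V ℕ) :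
    BddAbove {r : ℕ | ∃ l : List V, l.Nodup ∧ l.IsChain (M · · ≠ 0) ∧ l.length = r} :=
  ⟨Fintype.card V, fun _ ⟨_, hn, _, hl⟩ => hl ▸ hn.length_le_card⟩

lemma length_le_pLen {l : List V} (hn : l.Nodup) (hc : l.IsChain (M · · ≠ 0)) :
    l.length ≤ pLen M :=
  le_csSup (bddAbove_pathLengths M) ⟨l, hn, hc, rfl⟩

lemma pLen_le {n : ℕ} (h : ∀ l : List V, l.Nodup → l.IsChain (M · · ≠ 0) → l.length ≤ n) :
    pLen M ≤ n := by
  unfold pLen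
  exact csSup_le (nonempty_pathLengths M) fun _ ⟨l, hn, hc, hl⟩ => hl ▸ h l hn hc

lemma exists_path_length_eq_pLen (M : Matrix V V ℕ) :
    ∃ l : List V, l.Nodup ∧ l.IsChain (M · · ≠ 0) ∧ l.length = pLen M := by
  unfold pLen
  exact Nat.sSup_mem (nonempty_pathLengths M) (bddAbove_pathLengths M)

lemma one_le_pLen [Nonempty V] (M : Matrix V V ℕ) : 1 ≤ pLen M :=
  length_le_pLen (l := [Classical.arbitrary V]) (List.nodup_singleton _) (List.isChain_singleton _)

end pLen

lemma StrictUpper.nodup_of_isChain {q : ℕ} {A : Matrix (Fin q) (Fin q) ℕ} (hA : StrictUpper A)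
    {l : List (Fin q)} (hc : l.IsChain (A · · ≠ 0)) : l.Nodup :=
  have hlt : l.IsChain (· < ·) := hc.imp fun a b hab => lt_of_not_ge fun hle => hab (hA a b hle)
  (List.isChain_iff_pairwise.mp hlt).imp ne_of_lt

lemma exists_eq_map_inl_append_map_inr {α β : Type*} {r : α ⊕ β → α ⊕ β → Prop}
    (h : ∀ a b, ¬ r (.inr b) (.inl a)) {l : List (α ⊕ β)} (hl : l.IsChain r) :
    ∃ (l₁ : List α) (l₂ : List β), l = l₁.map Sum.inl ++ l₂.map Sum.inr := by
  induction l with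
  | nil => exact ⟨[], [], rfl⟩
  | cons x l ih =>
    obtain ⟨l₁, l₂, rfl⟩ := ih hl.tail
    rcases x with a | b
    · exact ⟨a :: l₁, l₂, rfl⟩
    · rcases l₁ with _ | ⟨a, l₁⟩
      · exact ⟨[], b :: l₂, rfl⟩
      · exact absurd (List.isChain_cons_cons.mp hl).1 (h a b)

section fromBlocks

variable {V : Type*} [DecidableEq V]

lemma isChain_fromBlocks_one_iff {A B : Matrix V V ℕ} {l₁ l₂ : List V} :
    (l₁.map Sum.inl ++ l₂.map Sum.inr).IsChain (Matrix.fromBlocks A 1 0 B · · ≠ 0) ↔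
      l₁.IsChain (A · · ≠ 0) ∧ l₂.IsChain (B · · ≠ 0) ∧
        ∀ x ∈ l₁.getLast?, ∀ y ∈ l₂.head?, x = y := by
  simp [List.isChain_append, List.isChain_map, Matrix.one_apply]

lemma pLen_fromBlocks_one_self_le [Fintype V] (A : Matrix V V ℕ)
    (hA : ∀ l : List V, l.IsChain (A · · ≠ 0) → l.Nodup) :
    pLen (Matrix.fromBlocks A 1 0 A) ≤ pLen A + 1 := by
  refine pLen_le fun l _ hl => ?_
  obtain ⟨l₁, l₂, rfl⟩ := exists_eq_map_inl_append_map_inr (by simp) hl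
  obtain ⟨h₁, h₂, hglue⟩ := isChain_fromBlocks_one_iff.mp hl
  rcases l₂ with _ | ⟨v, l₂⟩
  · simpa using (length_le_pLen (hA l₁ h₁) h₁).trans (Nat.le_succ _)
  · have hc : (l₁ ++ l₂).IsChain (A · · ≠ 0) :=
      h₁.append h₂.tail fun x hx y hy => (hglue x hx v rfl).symm ▸ h₂.rel_head? hy
    have := length_le_pLen (hA _ hc) hc
    simp only [List.length_append, List.length_map, List.length_cons] at this ⊢
    omega

lemma pLen_add_one_le_pLen_fromBlocks_one [Fintype V] [Nonempty V] (A B : Matrix V V ℕ) :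
    pLen A + 1 ≤ pLen (Matrix.fromBlocks A 1 0 B) := by
  obtain ⟨l, hn, hc, hl⟩ := exists_path_length_eq_pLen A
  rcases l.eq_nil_or_concat' with rfl | ⟨l, v, rfl⟩
  · simpa [← hl] using one_le_pLen A
  have hw : ((l ++ [v]).map Sum.inl ++ [Sum.inr v]).IsChain (Matrix.fromBlocks A 1 0 B · · ≠ 0) :=
    isChain_fromBlocks_one_iff.mpr ⟨hc, List.isChain_singleton _, by simp⟩
  have hnw : ((l ++ [v]).map Sum.inl ++ [(Sum.inr v : V ⊕ V)]).Nodup :=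
    List.nodup_append.mpr ⟨hn.map Sum.inl_injective, List.nodup_singleton _, by simp⟩
  have := length_le_pLen hnw hw
  simp only [List.length_append, List.length_map, List.length_singleton] at this hl
  omega

end fromBlocks

theorem pLen_fromBlocks_one_general {q : ℕ} (hq : 0 < q) (A B : Matrix (Fin q) (Fin q) ℕ)
    (hA : StrictUpper A)
    (hAB : A = B) :
    pLen (Matrix.fromBlocks A 1 0 B) = pLen A + 1 := by
  subst hAB
  have : Nonempty (Fin q) := ⟨⟨0, hq⟩⟩
  exact le_antisymm (pLen_fromBlocks_one_self_le A fun _ => hA.nodup_of_isChain)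
    (pLen_add_one_le_pLen_fromBlocks_one A A)

/-- **Lemma (longest paths, part (ii)).**  For a strictly upper triangular adjacency matrix `A`
(of positive order), the longest path in the graph of `R = [[A, I], [0, B]]` with `A = B` has
`p(A) + 1` vertices. -/
theorem pLen_fromBlocks_one {q : ℕ} (hq : 0 < q) (A B : Matrix (Fin q) (Fin q) ℕ)
    (hA : StrictUpper A) (hB : StrictUpper B)
    (hA01 : ZeroOne A) (hB01 : ZeroOne B)
    (hAB : A = B) :
    pLen (Matrix.fromBlocks A 1 0 B) = pLen A + 1 :=
  pLen_fromBlocks_one_general hq A B hA hAB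
end

section
/- Let X = A + iB be a complex n×n matrix with A and B real, let X = VJV^{−1} be a Jordan decomposition of X, and let f be a scalar function, defined on the spectrum of X with sufficiently many derivatives, satisfying f(J̄) = f(J)̄ (conjugation commutes with f on the Jordan form). Then f([[A, B],[−B, A]]) = [[Re f(X), Im f(X)],[−Im f(X), Re f(X)]], where f is applied as a primary matrix function. -/
open Matrix Filter Asymptotics Topology

attribute [local instance] Matrix.frobeniusNormedAddCommGroup Matrix.frobeniusNormedSpace

/-- Index (size of largest Jordan block) of the eigenvalue `μ` of `A`. -/
noncomputable def nuIdx {N : Type*} [Fintype N] [DecidableEq N] (A : Matrix N N ℂ) (μ : ℂ) : ℕ :=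
  sInf {k : ℕ | LinearMap.ker (((A - μ • 1) ^ k).mulVecLin) =
      LinearMap.ker (((A - μ • 1) ^ (k + 1)).mulVecLin)}

/-- Size of the largest Jordan block of `A`. -/
noncomputable def jordanBound {N : Type*} [Fintype N] [DecidableEq N] (A : Matrix N N ℂ) : ℕ :=
  sSup (nuIdx A '' spectrum ℂ A)

/-- `A ∈ M_N(Ω, m)`: spectrum contained in `Ω` and largest Jordan block of size at most `m`. -/
def MnSet {N : Type*} [Fintype N] [DecidableEq N] (Ω : Set ℂ) (m : ℕ) (A : Matrix N N ℂ) : Prop :=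
  spectrum ℂ A ⊆ Ω ∧ jordanBound A ≤ m

open scoped Classical in
/-- The primary matrix function `f(A)`, defined (via Hermite interpolation) as `p(A)` for any
polynomial `p` matching the values and derivatives of `f` on the spectrum of `A` up to the
index of each eigenvalue; this coincides with the usual definition via the Jordan form. -/
noncomputable def matFun {N : Type*} [Fintype N] [DecidableEq N] (f : ℂ → ℂ)
    (A : Matrix N N ℂ) : Matrix N N ℂ :=
  if h : ∃ p : Polynomial ℂ, ∀ μ ∈ spectrum ℂ A, ∀ i < nuIdx A μ,
      iteratedDeriv i (fun z => p.eval z) μ = iteratedDeriv i f μ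
  then (Polynomial.aeval A) h.choose else 0

/-- Partial derivative in direction `d` of a function of `j` real variables. -/
noncomputable def pd {j : ℕ} {M : Type*} [NormedAddCommGroup M] [NormedSpace ℝ M]
    (d : Fin j) (A : (Fin j → ℝ) → M) : (Fin j → ℝ) → M :=
  fun x => fderiv ℝ A x (Pi.single d 1)

/-- Iterated partial derivative `∂^α` for a multi-index `α`. -/
noncomputable def mderiv {j : ℕ} {M : Type*} [NormedAddCommGroup M] [NormedSpace ℝ M]
    (α : Fin j → ℕ) (A : (Fin j → ℝ) → M) : (Fin j → ℝ) → M :=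
  ((List.finRange j).flatMap fun d => List.replicate (α d) d).foldr pd A

/-- Index type for the `2^i n × 2^i n` block matrices. -/
def Idx (n : ℕ) : ℕ → Type
  | 0 => Fin n
  | i + 1 => Idx n i ⊕ Idx n i

instance Idx.fintype (n : ℕ) : ∀ i, Fintype (Idx n i)
  | 0 => inferInstanceAs (Fintype (Fin n))
  | i + 1 => letI := Idx.fintype n i; inferInstanceAs (Fintype (Idx n i ⊕ Idx n i))

instance Idx.decEq (n : ℕ) : ∀ i, DecidableEq (Idx n i)
  | 0 => inferInstanceAs (DecidableEq (Fin n))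
  | i + 1 => letI := Idx.decEq n i; inferInstanceAs (DecidableEq (Idx n i ⊕ Idx n i))

/-- The recursive block upper triangular sequence `X_i(x)` of the paper. -/
noncomputable def Xseq {n j : ℕ} (A : (Fin j → ℝ) → Matrix (Fin n) (Fin n) ℂ) (d : ℕ → Fin j) :
    (i : ℕ) → (Fin j → ℝ) → Matrix (Idx n i) (Idx n i) ℂ
  | 0 => A
  | i + 1 => fun x =>
      Matrix.fromBlocks (Xseq A d i x) (pd (d i) (Xseq A d i) x) 0 (Xseq A d i x)

/-- The recursive block upper triangular sequence `F_i(x)` of the paper. -/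
noncomputable def Fseq {n j : ℕ} (f : ℂ → ℂ) (A : (Fin j → ℝ) → Matrix (Fin n) (Fin n) ℂ)
    (d : ℕ → Fin j) : (i : ℕ) → (Fin j → ℝ) → Matrix (Idx n i) (Idx n i) ℂ
  | 0 => fun x => matFun f (A x)
  | i + 1 => fun x =>
      Matrix.fromBlocks (Fseq f A d i x) (pd (d i) (Fseq f A d i) x) 0 (Fseq f A d i x)

/-- A matrix is in Jordan canonical form: zero off the diagonal and superdiagonal,
superdiagonal entries `0` or `1`, and consecutive diagonal entries linked by a nonzero
superdiagonal entry are equal. -/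
def IsJordanForm {N : ℕ} (J : Matrix (Fin N) (Fin N) ℂ) : Prop :=
  (∀ a b : Fin N, b ≠ a → (b : ℕ) ≠ (a : ℕ) + 1 → J a b = 0) ∧
  ∀ a b : Fin N, (b : ℕ) = (a : ℕ) + 1 → (J a b = 0 ∨ (J a b = 1 ∧ J a a = J b b))

/-!
With `S = [[1, 1], [i, -i]]` one has `[[Re M, Im M], [-Im M, Re M]] = S · diag(M, M̄) · S⁻¹`.
A primary matrix function is `f(A) = p(A)` for any polynomial `p` matching `f` and its
derivatives on the spectrum of `A` up to the index of each eigenvalue: two such polynomials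
differ by a multiple of the minimal polynomial, whose root multiplicities are bounded by the
indices. So a single Hermite interpolant of order `2N` on the spectra of all matrices involved
computes every value of `f` below, and polynomials commute with similarity and with
block-diagonal sums. Hence `f([[A, B], [-B, A]]) = S · diag(f(X), f(X̄)) · S⁻¹`, and
`f(X̄) = V̄ f(J̄) V̄⁻¹ = conj (V f(J) V⁻¹) = conj f(X)`.
-/

open Polynomial

namespace Polynomial

theorem iteratedDeriv_eval_eq {𝕜 : Type*} [NontriviallyNormedField 𝕜] (p : 𝕜[X]) (i : ℕ) :
    iteratedDeriv i (fun z => p.eval z) = fun z => (derivative^[i] p).eval z := by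
  induction i with
  | zero => rfl
  | succ i ih =>
    rw [iteratedDeriv_succ, ih, Function.iterate_succ_apply']
    funext z
    exact Polynomial.deriv _

theorem le_rootMultiplicity_of_iterate_derivative_eval_eq_zero {R : Type*} [CommRing R]
    [NoZeroDivisors R] [CharZero R] {p : R[X]} (hp : p ≠ 0) {t : R} {k : ℕ}
    (h : ∀ i < k, (derivative^[i] p).eval t = 0) : k ≤ p.rootMultiplicity t := by
  cases k with
  | zero => exact Nat.zero_le _
  | succ k =>
    exact (lt_rootMultiplicity_iff_isRoot_iterate_derivative hp).2 fun i hi => h i (by omega)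

theorem sum_le_natDegree_of_iterate_derivative_eval_eq_zero {R : Type*} [CommRing R] [IsDomain R]
    [CharZero R] [DecidableEq R] {p : R[X]} (hp : p ≠ 0) (s : Finset R) (m : R → ℕ)
    (h : ∀ t ∈ s, ∀ i < m t, (derivative^[i] p).eval t = 0) :
    ∑ t ∈ s, m t ≤ p.natDegree :=
  calc ∑ t ∈ s, m t
      ≤ ∑ t ∈ s ∪ p.roots.toFinset, p.roots.count t := by
        refine (Finset.sum_le_sum fun t ht => ?_).trans
          (Finset.sum_le_sum_of_subset Finset.subset_union_left)
        rw [count_roots]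
        exact le_rootMultiplicity_of_iterate_derivative_eval_eq_zero hp (h t ht)
    _ = Multiset.card p.roots :=
        Multiset.sum_count_eq_card fun t ht => Finset.mem_union_right _ (Multiset.mem_toFinset.2 ht)
    _ ≤ p.natDegree := card_roots' p

theorem exists_iterate_derivative_eval_eq {K : Type*} [Field K] [CharZero K] (s : Finset K)
    (m : K → ℕ) (v : K → ℕ → K) :
    ∃ p : K[X], ∀ t ∈ s, ∀ i < m t, (derivative^[i] p).eval t = v t i := by
  classical
  set M := ∑ t ∈ s, m t
  let E : degreeLT K M →ₗ[K] ((t : s) → Fin (m t) → K) :=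
    LinearMap.pi fun t => LinearMap.pi fun i =>
      leval t.1 ∘ₗ ((derivative : K[X] →ₗ[K] K[X]) ^ (i : ℕ)) ∘ₗ (degreeLT K M).subtype
  have hE : ∀ p t i, E p t i = (derivative^[(i : ℕ)] (p : K[X])).eval t.1 := fun p t i => by
    simp [E, Module.End.pow_apply]
  have hinj : Function.Injective E := by
    rw [← LinearMap.ker_eq_bot, LinearMap.ker_eq_bot']
    intro p hp
    by_contra hp0
    have hdeg := sum_le_natDegree_of_iterate_derivative_eval_eq_zero
      (Subtype.coe_injective.ne hp0 : (p : K[X]) ≠ 0) s m fun t ht i hi => by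
        simpa [hE] using congrFun (congrFun hp ⟨t, ht⟩) ⟨i, hi⟩
    have hlt := mem_degreeLT.1 p.2
    rw [degree_eq_natDegree (Subtype.coe_injective.ne hp0), Nat.cast_lt] at hlt
    omega
  have hdim : Module.finrank K (degreeLT K M) = Module.finrank K ((t : s) → Fin (m t) → K) := by
    simp [(degreeLTEquiv K M).finrank_eq, Module.finrank_pi_fintype, M, Finset.sum_attach s m]
  obtain ⟨p, hp⟩ := (LinearMap.injective_iff_surjective_of_finrank_eq_finrank hdim).1 hinj
    fun t i => v t i
  exact ⟨p, fun t ht i hi => by simpa [hE] using congrFun (congrFun hp ⟨t, ht⟩) ⟨i, hi⟩⟩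

end Polynomial

theorem Module.End.rootMultiplicity_minpoly_le {K V : Type*} [Field K] [AddCommGroup V]
    [Module K V] [FiniteDimensional K V] (f : Module.End K V) (μ : K) {k : ℕ}
    (hk : LinearMap.ker ((f - algebraMap K _ μ) ^ k) =
      LinearMap.ker ((f - algebraMap K _ μ) ^ (k + 1))) :
    (minpoly K f).rootMultiplicity μ ≤ k := by
  set g := f - algebraMap K _ μ
  set m := (minpoly K f).rootMultiplicity μ
  set q := minpoly K f /ₘ (X - C μ) ^ m
  have hfactor : (X - C μ) ^ m * q = minpoly K f := pow_mul_divByMonic_rootMultiplicity_eq _ _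
  have hq : q ≠ 0 := right_ne_zero_of_mul (hfactor ▸ minpoly.ne_zero_of_finite K f)
  by_contra! hkm
  -- the kernels of the powers of `g` stabilize from `k` on, and `g ^ m` kills the range of `q(f)`
  have hkill : aeval f ((X - C μ) ^ k * q) = 0 := by
    ext v
    have hv : aeval f q v ∈ LinearMap.ker (g ^ m) := by
      rw [LinearMap.mem_ker, ← Module.End.mul_apply]
      simpa [g, ← hfactor] using congrArg (· v) (minpoly.aeval K f)
    rw [← Nat.add_sub_cancel' hkm.le, ← Module.End.ker_pow_constant hk] at hv
    simpa [g] using hv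
  have hdeg := natDegree_le_of_dvd (minpoly.dvd K f hkill)
    (mul_ne_zero (pow_ne_zero _ (X_sub_C_ne_zero μ)) hq)
  rw [← hfactor, natDegree_mul (pow_ne_zero _ (X_sub_C_ne_zero μ)) hq,
    natDegree_mul (pow_ne_zero _ (X_sub_C_ne_zero μ)) hq] at hdeg
  simp only [natDegree_pow, natDegree_X_sub_C, mul_one] at hdeg
  omega

section NuIdx

variable {n : Type*} [Fintype n] [DecidableEq n]

theorem Matrix.toLin'_sub_smul_one_pow {R : Type*} [CommRing R] (A : Matrix n n R) (μ : R)
    (k : ℕ) :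
    toLin' ((A - μ • 1) ^ k) = (toLin' A - algebraMap R _ μ) ^ k := by
  change Matrix.toLinAlgEquiv' _ = (Matrix.toLinAlgEquiv' A - _) ^ k
  rw [map_pow, map_sub, ← Algebra.algebraMap_eq_smul_one, AlgEquiv.commutes]

theorem nuIdx_eq_sInf (A : Matrix n n ℂ) (μ : ℂ) :
    nuIdx A μ = sInf {k | LinearMap.ker ((toLin' A - algebraMap ℂ _ μ) ^ k) =
      LinearMap.ker ((toLin' A - algebraMap ℂ _ μ) ^ (k + 1))} := by
  simp only [nuIdx, ← Matrix.toLin'_apply', toLin'_sub_smul_one_pow]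

theorem ker_toLin'_sub_pow_card_succ (A : Matrix n n ℂ) (μ : ℂ) :
    LinearMap.ker ((toLin' A - algebraMap ℂ _ μ) ^ Fintype.card n) =
      LinearMap.ker ((toLin' A - algebraMap ℂ _ μ) ^ (Fintype.card n + 1)) := by
  rw [← Module.finrank_fintype_fun_eq_card ℂ]
  exact (Module.End.ker_pow_eq_ker_pow_finrank_of_le (Nat.le_succ _)).symm

theorem nuIdx_le_card (A : Matrix n n ℂ) (μ : ℂ) : nuIdx A μ ≤ Fintype.card n := by
  rw [nuIdx_eq_sInf]
  exact Nat.sInf_le (ker_toLin'_sub_pow_card_succ A μ)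

theorem nuIdx_mem (A : Matrix n n ℂ) (μ : ℂ) :
    nuIdx A μ ∈ {k | LinearMap.ker ((toLin' A - algebraMap ℂ _ μ) ^ k) =
      LinearMap.ker ((toLin' A - algebraMap ℂ _ μ) ^ (k + 1))} := by
  rw [nuIdx_eq_sInf]
  exact Nat.sInf_mem ⟨_, ker_toLin'_sub_pow_card_succ A μ⟩

theorem rootMultiplicity_minpoly_le_nuIdx (A : Matrix n n ℂ) (μ : ℂ) :
    (minpoly ℂ A).rootMultiplicity μ ≤ nuIdx A μ := by
  rw [← Matrix.minpoly_toLin']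
  exact Module.End.rootMultiplicity_minpoly_le _ μ (nuIdx_mem A μ)

theorem aeval_eq_zero_of_iterate_derivative_eval_eq_zero (A : Matrix n n ℂ) (r : ℂ[X])
    (hr : ∀ μ ∈ spectrum ℂ A, ∀ i < nuIdx A μ, (derivative^[i] r).eval μ = 0) :
    aeval A r = 0 := by
  classical
  rcases eq_or_ne r 0 with rfl | hr0
  · exact map_zero _
  rw [← minpoly.dvd_iff, IsAlgClosed.dvd_iff_roots_le_roots (minpoly.ne_zero A.isIntegral) hr0,
    Multiset.le_iff_count]
  intro μ
  rw [count_roots, count_roots]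
  by_cases hμ : (minpoly ℂ A).IsRoot μ
  · have hspec : μ ∈ spectrum ℂ A :=
      Matrix.mem_spectrum_of_isRoot_charpoly (hμ.dvd (Matrix.minpoly_dvd_charpoly A))
    exact (rootMultiplicity_minpoly_le_nuIdx A μ).trans
      (le_rootMultiplicity_of_iterate_derivative_eval_eq_zero hr0 (hr μ hspec))
  · simp [rootMultiplicity_eq_zero hμ]

theorem matFun_eq_aeval (f : ℂ → ℂ) (A : Matrix n n ℂ) (p : ℂ[X])
    (hp : ∀ μ ∈ spectrum ℂ A, ∀ i < nuIdx A μ,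
      iteratedDeriv i (fun z => p.eval z) μ = iteratedDeriv i f μ) :
    matFun f A = aeval A p := by
  have hex : ∃ q : ℂ[X], ∀ μ ∈ spectrum ℂ A, ∀ i < nuIdx A μ,
      iteratedDeriv i (fun z => q.eval z) μ = iteratedDeriv i f μ := ⟨p, hp⟩
  rw [matFun, dif_pos hex, ← sub_eq_zero, ← map_sub]
  refine aeval_eq_zero_of_iterate_derivative_eval_eq_zero A _ fun μ hμ i hi => ?_
  have hq := hex.choose_spec μ hμ i hi
  rw [← hp μ hμ i hi, iteratedDeriv_eval_eq, iteratedDeriv_eval_eq] at hq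
  rw [iterate_derivative_sub, eval_sub]
  exact sub_eq_zero.2 hq

end NuIdx

theorem Polynomial.aeval_units_conj {R A : Type*} [CommSemiring R] [Semiring A] [Algebra R A]
    (u : Aˣ) (a : A) (p : R[X]) : aeval (↑u * a * ↑u⁻¹) p = ↑u * aeval a p * ↑u⁻¹ := by
  induction p using Polynomial.induction_on' with
  | add p q hp hq => rw [map_add, map_add, hp, hq, mul_add, add_mul]
  | monomial k r =>
    rw [aeval_monomial, aeval_monomial, Units.conj_pow, ← Algebra.smul_def, ← Algebra.smul_def,
      mul_smul_comm, smul_mul_assoc]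

theorem Polynomial.aeval_map_units_conj {R A B : Type*} [CommSemiring R] [Semiring A]
    [Semiring B] [Algebra R A] [Algebra R B] (φ : A →+* B) (u : Aˣ) (a : A) (p : R[X])
    (h : aeval (φ a) p = φ (aeval a p)) :
    aeval (φ (↑u * a * ↑u⁻¹)) p = φ (aeval (↑u * a * ↑u⁻¹) p) := by
  have hφu : φ (↑u * a * ↑u⁻¹) =
      ↑(Units.map (φ : A →* B) u) * φ a * ↑(Units.map (φ : A →* B) u)⁻¹ := by
    simp
  rw [hφu, aeval_units_conj, h, aeval_units_conj]
  simp

theorem Matrix.aeval_fromBlocks_zero {R m n : Type*} [CommSemiring R] [Fintype m] [Fintype n]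
    [DecidableEq m] [DecidableEq n] (A : Matrix m m R) (B : Matrix n n R) (p : R[X]) :
    aeval (fromBlocks A 0 0 B) p = fromBlocks (aeval A p) 0 0 (aeval B p) := by
  induction p using Polynomial.induction_on' with
  | add p q hp hq => simp only [map_add, hp, hq, fromBlocks_add, add_zero]
  | monomial k r =>
    simp only [aeval_monomial, fromBlocks_diagonal_pow, ← Algebra.smul_def, fromBlocks_smul,
      smul_zero]

section RealBlockForm

variable {n : Type*} [Fintype n] [DecidableEq n]

def realBlockForm (M : Matrix n n ℂ) : Matrix (n ⊕ n) (n ⊕ n) ℂ :=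
  fromBlocks (M.map fun z => (z.re : ℂ)) (M.map fun z => (z.im : ℂ))
    (-(M.map fun z => (z.im : ℂ))) (M.map fun z => (z.re : ℂ))

theorem fromBlocks_I_mul_fromBlocks_half :
    fromBlocks 1 1 (Complex.I • 1) (-Complex.I • 1) *
      fromBlocks ((1 / 2 : ℂ) • 1) ((-Complex.I / 2) • 1) ((1 / 2 : ℂ) • 1)
        ((Complex.I / 2) • 1) = (1 : Matrix (n ⊕ n) (n ⊕ n) ℂ) := by
  rw [fromBlocks_multiply, ← fromBlocks_one]
  congr 1 <;> ext i j <;> by_cases hij : i = j <;>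
    simp [one_apply, hij, Complex.ext_iff] <;> norm_num

variable (n) in
noncomputable def realBlockConj : (Matrix (n ⊕ n) (n ⊕ n) ℂ)ˣ :=
  ⟨_, _, fromBlocks_I_mul_fromBlocks_half, mul_eq_one_comm.mp fromBlocks_I_mul_fromBlocks_half⟩

theorem realBlockForm_eq_conj (M : Matrix n n ℂ) :
    realBlockForm M = (realBlockConj n : Matrix (n ⊕ n) (n ⊕ n) ℂ) *
      fromBlocks M 0 0 (M.map (starRingEnd ℂ)) *
        (↑(realBlockConj n)⁻¹ : Matrix (n ⊕ n) (n ⊕ n) ℂ) := by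
  simp only [realBlockConj, Units.inv_mk, fromBlocks_multiply]
  ext (i | i) (j | j) <;> apply Complex.ext <;> simp [realBlockForm] <;> ring

theorem exists_matFun_eq_aeval (f : ℂ → ℂ) {σ : Set ℂ} (hσ : σ.Finite) (m : ℕ) :
    ∃ p : ℂ[X], ∀ {ι : Type} [Fintype ι] [DecidableEq ι] (A : Matrix ι ι ℂ),
      spectrum ℂ A ⊆ σ → Fintype.card ι ≤ m → matFun f A = aeval A p := by
  obtain ⟨p, hp⟩ := exists_iterate_derivative_eval_eq hσ.toFinset (fun _ => m)
    fun μ i => iteratedDeriv i f μ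
  refine ⟨p, fun A hA hm => matFun_eq_aeval f A p fun μ hμ i hi => ?_⟩
  rw [iteratedDeriv_eval_eq]
  exact hp μ (hσ.mem_toFinset.2 (hA hμ)) i (hi.trans_le ((nuIdx_le_card A μ).trans hm))

theorem matFun_block_real_imag_general {N : ℕ} (X V J : Matrix (Fin N) (Fin N) ℂ) (f : ℂ → ℂ)
    (hV : IsUnit V.det) (hX : X = V * J * V⁻¹)
    (hconj : matFun f (J.map (starRingEnd ℂ)) = (matFun f J).map (starRingEnd ℂ)) :
    matFun f
        (Matrix.fromBlocks (X.map fun z => ((z.re : ℂ))) (X.map fun z => ((z.im : ℂ)))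
          (-(X.map fun z => ((z.im : ℂ)))) (X.map fun z => ((z.re : ℂ)))) =
      Matrix.fromBlocks ((matFun f X).map fun z => ((z.re : ℂ)))
        ((matFun f X).map fun z => ((z.im : ℂ)))
        (-((matFun f X).map fun z => ((z.im : ℂ))))
        ((matFun f X).map fun z => ((z.re : ℂ))) := by
  change matFun f (realBlockForm X) = realBlockForm (matFun f X)
  set φ : Matrix (Fin N) (Fin N) ℂ →+* Matrix (Fin N) (Fin N) ℂ :=
    (starRingEnd ℂ).mapMatrix (m := Fin N)
  obtain ⟨p, hp⟩ := exists_matFun_eq_aeval f (((X.finite_spectrum.union J.finite_spectrum).union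
    (φ J).finite_spectrum).union (realBlockForm X).finite_spectrum) (2 * N)
  have hFX := hp X (fun μ h => by simp [h]) (by simp [two_mul])
  have hFJ := hp J (fun μ h => by simp [h]) (by simp [two_mul])
  have hFJc := hp (φ J) (fun μ h => by simp [h]) (by simp [two_mul])
  have hFR := hp (realBlockForm X) (fun μ h => by simp [h]) (by simp [two_mul])
  have hconjX : aeval (φ X) p = φ (aeval X p) := by
    rw [hX]
    refine aeval_map_units_conj φ (Matrix.nonsingInvUnit V hV) J p ?_
    rw [← hFJc, ← hFJ]
    exact hconj
  rw [hFR, realBlockForm_eq_conj, realBlockForm_eq_conj, aeval_units_conj, aeval_fromBlocks_zero,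
    hFX]
  exact congrArg (fun B => _ * fromBlocks _ 0 0 B * _) hconjX

/-- **Theorem (matrix functions of the real–imaginary block form).**  Let `X = A + iB` with
`A, B` real, `X = V J V⁻¹` a Jordan decomposition, and `f` defined with sufficiently many
derivatives on the spectrum of `X` (and its conjugate) and satisfying `f(J̄) = conj (f(J))`.
Then `f([[A, B], [-B, A]]) = [[Re f(X), Im f(X)], [-Im f(X), Re f(X)]]`. -/
theorem matFun_block_real_imag {N : ℕ} (X V J : Matrix (Fin N) (Fin N) ℂ) (f : ℂ → ℂ)
    (hV : IsUnit V.det) (hJ : IsJordanForm J) (hX : X = V * J * V⁻¹)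
    (hf : ∀ μ ∈ spectrum ℂ X,
      ContDiffAt ℂ (nuIdx X μ) f μ ∧ ContDiffAt ℂ (nuIdx X μ) f ((starRingEnd ℂ) μ))
    (hconj : matFun f (J.map (starRingEnd ℂ)) = (matFun f J).map (starRingEnd ℂ)) :
    matFun f
        (Matrix.fromBlocks (X.map fun z => ((z.re : ℂ))) (X.map fun z => ((z.im : ℂ)))
          (-(X.map fun z => ((z.im : ℂ)))) (X.map fun z => ((z.re : ℂ)))) =
      Matrix.fromBlocks ((matFun f X).map fun z => ((z.re : ℂ)))
        ((matFun f X).map fun z => ((z.im : ℂ)))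
        (-((matFun f X).map fun z => ((z.im : ℂ))))
        ((matFun f X).map fun z => ((z.re : ℂ))) :=
  matFun_block_real_imag_general X V J f hV hX hconj
end RealBlockForm
end
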